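/- Let γ>0, ρ(x,y)=(|x|^{2(1+γ)}+(1+γ)²|y|²)^{1/(2(1+γ))}, and ∇_γ=(∇_x,|x|^γ∇_y). Then at every point z=(x,y) with ρ(z)≠0 and x≠0, the identity ∇_γ(|∇_γρ|)·∇_γρ = 0 holds, i.e., the Grushin gradient of the function z↦|∇_γρ(z)| is orthogonal to ∇_γρ. -/

import Mathlib

/-!
Both `ρ` and `ψ = |x|^p / ρ^p` depend on `z = (x, y)` only through `|x|` and `|y|`, so their
differentials are combinations of `⟪x, ·⟫` and `⟪y, ·⟫`, whose Grushin pairings are explicit.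
Differentiating `ρ^{2(1+γ)} = |x|^{2(1+γ)} + (1+γ)²|y|²` gives
`∇_x ρ = |x|^{2γ} x / ρ^{1+2γ}` and `∇_y ρ = (1+γ) y / ρ^{1+2γ}`, hence the eikonal identity
`|∇_γ ρ|² = |x|^{2γ} / ρ^{2γ}`. By the product rule
`∇_γ ψ · ∇_γ ρ = ρ^{-p} ∇_γ |x|^p · ∇_γ ρ - p |x|^p ρ^{-p-1} |∇_γ ρ|²`,
and both terms equal `p |x|^{p+2γ} ρ^{-p-1-2γ}`.
-/

open MeasureTheory Real

/-- The product space `ℝ^m × ℝ^k` for the Baouendi-Grushin setting. -/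
abbrev GSp (m k : ℕ) := EuclideanSpace ℝ (Fin m) × EuclideanSpace ℝ (Fin k)

/-- The Baouendi-Grushin gauge `ρ(x,y) = (|x|^{2(1+γ)} + (1+γ)²|y|²)^{1/(2(1+γ))}`. -/
noncomputable def grho (γ : ℝ) {m k : ℕ} (z : GSp m k) : ℝ :=
  (‖z.1‖ ^ (2 * (1 + γ)) + (1 + γ) ^ 2 * ‖z.2‖ ^ 2) ^ (1 / (2 * (1 + γ)))

/-- Squared norm of the Baouendi-Grushin gradient
`|∇_γ φ|² = |∇_x φ|² + |x|^{2γ} |∇_y φ|²`. -/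
noncomputable def ggradSq (γ : ℝ) {m k : ℕ} (φ : GSp m k → ℝ) (z : GSp m k) : ℝ :=
  (∑ i, (fderiv ℝ φ z (EuclideanSpace.single i (1:ℝ), 0)) ^ 2)
  + ‖z.1‖ ^ (2 * γ) * ∑ j, (fderiv ℝ φ z (0, EuclideanSpace.single j (1:ℝ))) ^ 2

/-- The Baouendi-Grushin operator `Δ_γ φ = Δ_x φ + |x|^{2γ} Δ_y φ`. -/
noncomputable def glap (γ : ℝ) {m k : ℕ} (φ : GSp m k → ℝ) (z : GSp m k) : ℝ :=
  (∑ i, fderiv ℝ (fun w => fderiv ℝ φ w (EuclideanSpace.single i (1:ℝ), 0)) z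
      (EuclideanSpace.single i (1:ℝ), 0))
  + ‖z.1‖ ^ (2 * γ) * ∑ j, fderiv ℝ (fun w => fderiv ℝ φ w (0, EuclideanSpace.single j (1:ℝ))) z
      (0, EuclideanSpace.single j (1:ℝ))

noncomputable section

variable {m k : ℕ}

/-- `grushinInner γ z (fderiv ℝ f z) (fderiv ℝ g z)` is the paper's `∇_γ f · ∇_γ g` at `z`. -/
def grushinInner (γ : ℝ) (z : GSp m k) (L M : GSp m k →L[ℝ] ℝ) : ℝ :=
  (∑ i, L (EuclideanSpace.single i 1, 0) * M (EuclideanSpace.single i 1, 0)) +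
    ‖z.1‖ ^ (2 * γ) * ∑ j, L (0, EuclideanSpace.single j 1) * M (0, EuclideanSpace.single j 1)

lemma grushinInner_add_left (γ : ℝ) (z : GSp m k) (L L' M : GSp m k →L[ℝ] ℝ) :
    grushinInner γ z (L + L') M = grushinInner γ z L M + grushinInner γ z L' M := by
  simp only [grushinInner, add_apply, add_mul, Finset.sum_add_distrib]
  ring

lemma grushinInner_smul_left (γ : ℝ) (z : GSp m k) (c : ℝ) (L M : GSp m k →L[ℝ] ℝ) :
    grushinInner γ z (c • L) M = c * grushinInner γ z L M := by
  simp only [grushinInner, smul_apply, smul_eq_mul, mul_assoc, ← Finset.mul_sum]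
  ring

/-- `v ↦ a ⟪x, v.1⟫ + b ⟪y, v.2⟫` at `z = (x, y)`: the shape of the differential of any function
of `|x|` and `|y|`. -/
def radialCLM (z : GSp m k) (a b : ℝ) : GSp m k →L[ℝ] ℝ :=
  a • (innerSL ℝ z.1).comp (ContinuousLinearMap.fst ℝ _ _) +
    b • (innerSL ℝ z.2).comp (ContinuousLinearMap.snd ℝ _ _)

@[simp]
lemma radialCLM_add (z : GSp m k) (a b a' b' : ℝ) :
    radialCLM z a b + radialCLM z a' b' = radialCLM z (a + a') (b + b') := by
  simp only [radialCLM, add_smul]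
  abel

@[simp]
lemma smul_radialCLM (z : GSp m k) (c a b : ℝ) :
    c • radialCLM z a b = radialCLM z (c * a) (c * b) := by
  simp only [radialCLM, smul_add, smul_smul]

lemma grushinInner_radialCLM (γ : ℝ) (z : GSp m k) (a b a' b' : ℝ) :
    grushinInner γ z (radialCLM z a b) (radialCLM z a' b') =
      a * a' * ‖z.1‖ ^ 2 + ‖z.1‖ ^ (2 * γ) * (b * b' * ‖z.2‖ ^ 2) := by
  simp only [grushinInner, radialCLM, add_apply, smul_apply, ContinuousLinearMap.comp_apply,
    ContinuousLinearMap.coe_fst', ContinuousLinearMap.coe_snd', coe_innerSL_apply,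
    EuclideanSpace.inner_single_right, ringHom_apply, one_mul, smul_eq_mul, inner_zero_right,
    mul_zero, add_zero, zero_add, Finset.mul_sum, EuclideanSpace.norm_sq_eq, norm_eq_abs, sq_abs]
  congr 1
  · exact Finset.sum_congr rfl fun i _ => by ring
  · exact Finset.sum_congr rfl fun i _ => by ring

lemma hasFDerivAt_norm_rpow_of_ne_zero {E : Type*} [NormedAddCommGroup E] [InnerProductSpace ℝ E]
    {x : E} (hx : x ≠ 0) (p : ℝ) :
    HasFDerivAt (fun x : E ↦ ‖x‖ ^ p) ((p * ‖x‖ ^ (p - 2)) • innerSL ℝ x) x := by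
  have hsq := (hasStrictFDerivAt_norm_sq x).hasFDerivAt.rpow_const (p := p / 2) (by simp [hx])
  convert hsq using 1
  · ext y
    rw [← Real.rpow_natCast_mul (norm_nonneg _)]
    ring_nf
  · rw [← Real.rpow_natCast_mul (norm_nonneg _), ← Nat.cast_smul_eq_nsmul ℝ, smul_smul]
    congr 1
    push_cast
    ring_nf

lemma hasFDerivAt_norm_fst_rpow {z : GSp m k} (hx : z.1 ≠ 0) (p : ℝ) :
    HasFDerivAt (fun w : GSp m k ↦ ‖w.1‖ ^ p) (radialCLM z (p * ‖z.1‖ ^ (p - 2)) 0) z :=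
  ((hasFDerivAt_norm_rpow_of_ne_zero hx p).comp z hasFDerivAt_fst).congr_fderiv <| by
    ext <;> simp [radialCLM]

lemma hasFDerivAt_norm_snd_sq (z : GSp m k) :
    HasFDerivAt (fun w : GSp m k ↦ ‖w.2‖ ^ 2) (radialCLM z 0 2) z :=
  ((hasStrictFDerivAt_norm_sq z.2).hasFDerivAt.comp z hasFDerivAt_snd).congr_fderiv <| by
    ext <;> simp [radialCLM]

lemma grho_nonneg (γ : ℝ) (z : GSp m k) : 0 ≤ grho γ z := by
  unfold grho
  positivity

lemma grho_rpow (γ : ℝ) (hγ : 1 + γ ≠ 0) (z : GSp m k) :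
    grho γ z ^ (2 * (1 + γ)) = ‖z.1‖ ^ (2 * (1 + γ)) + (1 + γ) ^ 2 * ‖z.2‖ ^ 2 := by
  rw [grho, one_div, Real.rpow_inv_rpow (by positivity) (by simpa using hγ)]

lemma hasFDerivAt_grho (γ : ℝ) (hγ : 1 + γ ≠ 0) {z : GSp m k} (hz : grho γ z ≠ 0)
    (hx : z.1 ≠ 0) :
    HasFDerivAt (grho γ)
      (radialCLM z (‖z.1‖ ^ (2 * γ) / grho γ z ^ (1 + 2 * γ)) ((1 + γ) / grho γ z ^ (1 + 2 * γ)))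
      z := by
  set F : GSp m k → ℝ := fun w ↦ ‖w.1‖ ^ (2 * (1 + γ)) + (1 + γ) ^ 2 * ‖w.2‖ ^ 2
  set s : ℝ := 1 / (2 * (1 + γ))
  have hs : s * (2 * (1 + γ)) = 1 := one_div_mul_cancel (by simpa using hγ)
  have hF : HasFDerivAt F (radialCLM z (2 * (1 + γ) * ‖z.1‖ ^ (2 * (1 + γ) - 2)) 0 +
      (1 + γ) ^ 2 • radialCLM z 0 2) z :=
    (hasFDerivAt_norm_fst_rpow hx _).add ((hasFDerivAt_norm_snd_sq z).const_mul _)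
  have hFz : 0 < F z := by
    refine lt_of_le_of_ne (by positivity) fun h ↦ hz ?_
    change F z ^ s = 0
    rw [← h, Real.zero_rpow (left_ne_zero_of_mul_eq_one hs)]
  have hpow : F z ^ (s - 1) = (grho γ z ^ (1 + 2 * γ))⁻¹ := by
    rw [grho, ← Real.rpow_mul hFz.le, ← Real.rpow_neg hFz.le]
    congr 1
    linear_combination hs
  refine (hF.rpow_const (p := s) (Or.inl hFz.ne')).congr_fderiv ?_
  simp only [radialCLM_add, smul_radialCLM, hpow, show 2 * (1 + γ) - 2 = 2 * γ by ring]
  congr 1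
  · linear_combination (‖z.1‖ ^ (2 * γ) * (grho γ z ^ (1 + 2 * γ))⁻¹) * hs
  · linear_combination ((1 + γ) * (grho γ z ^ (1 + 2 * γ))⁻¹) * hs

section

variable {γ : ℝ} {z : GSp m k}

lemma grushinInner_fderiv_grho_self (hγ : 1 + γ ≠ 0) (hz : grho γ z ≠ 0) (hx : z.1 ≠ 0) :
    grushinInner γ z (fderiv ℝ (grho γ) z) (fderiv ℝ (grho γ) z) =
      ‖z.1‖ ^ (2 * γ) / grho γ z ^ (2 * γ) := by
  have hρ : 0 < grho γ z := (grho_nonneg γ z).lt_of_ne' hz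
  have hX : 0 < ‖z.1‖ := norm_pos_iff.mpr hx
  have hρpow : grho γ z ^ (2 * (1 + γ)) = grho γ z ^ (2 * γ) * grho γ z ^ 2 := by
    rw [← Real.rpow_natCast, ← Real.rpow_add hρ]; push_cast; ring_nf
  have hXpow : ‖z.1‖ ^ (2 * (1 + γ)) = ‖z.1‖ ^ (2 * γ) * ‖z.1‖ ^ 2 := by
    rw [← Real.rpow_natCast, ← Real.rpow_add hX]; push_cast; ring_nf
  have hρ' : grho γ z ^ (1 + 2 * γ) = grho γ z * grho γ z ^ (2 * γ) := by
    rw [Real.rpow_add hρ, Real.rpow_one]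
  have hdef := grho_rpow γ hγ z
  rw [(hasFDerivAt_grho γ hγ hz hx).fderiv, grushinInner_radialCLM, hρ']
  rw [hρpow, hXpow] at hdef
  have : 0 < grho γ z ^ (2 * γ) := by positivity
  field_simp
  linear_combination -hdef

lemma grushinInner_fderiv_norm_fst_rpow_grho (hγ : 1 + γ ≠ 0) (hz : grho γ z ≠ 0) (hx : z.1 ≠ 0)
    (p : ℝ) :
    grushinInner γ z (fderiv ℝ (fun w : GSp m k ↦ ‖w.1‖ ^ p) z) (fderiv ℝ (grho γ) z) =
      p * ‖z.1‖ ^ p * ‖z.1‖ ^ (2 * γ) / grho γ z ^ (1 + 2 * γ) := by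
  have hX : 0 < ‖z.1‖ := norm_pos_iff.mpr hx
  rw [(hasFDerivAt_norm_fst_rpow hx p).fderiv, (hasFDerivAt_grho γ hγ hz hx).fderiv,
    grushinInner_radialCLM, Real.rpow_sub hX, Real.rpow_two]
  field_simp
  ring

lemma hasFDerivAt_norm_fst_rpow_div_grho_rpow (hγ : 1 + γ ≠ 0) (hz : grho γ z ≠ 0) (hx : z.1 ≠ 0)
    (p : ℝ) :
    HasFDerivAt (fun w : GSp m k ↦ ‖w.1‖ ^ p / grho γ w ^ p)
      (‖z.1‖ ^ p • ((-p * grho γ z ^ (-p - 1)) • fderiv ℝ (grho γ) z) +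
        grho γ z ^ (-p) • fderiv ℝ (fun w : GSp m k ↦ ‖w.1‖ ^ p) z) z := by
  have hψ : (fun w : GSp m k ↦ ‖w.1‖ ^ p / grho γ w ^ p) =
      fun w ↦ ‖w.1‖ ^ p * grho γ w ^ (-p) := by
    ext w
    rw [Real.rpow_neg (grho_nonneg γ w), div_eq_mul_inv]
  rw [hψ]
  exact (hasFDerivAt_norm_fst_rpow hx p).differentiableAt.hasFDerivAt.mul
    ((hasFDerivAt_grho γ hγ hz hx).differentiableAt.hasFDerivAt.rpow_const (Or.inl hz))

theorem grushinInner_fderiv_norm_fst_rpow_div_grho_rpow_eq_zero (hγ : 1 + γ ≠ 0)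
    (hz : grho γ z ≠ 0) (hx : z.1 ≠ 0) (p : ℝ) :
    grushinInner γ z (fderiv ℝ (fun w : GSp m k ↦ ‖w.1‖ ^ p / grho γ w ^ p) z)
      (fderiv ℝ (grho γ) z) = 0 := by
  have hρ : 0 < grho γ z := (grho_nonneg γ z).lt_of_ne' hz
  rw [(hasFDerivAt_norm_fst_rpow_div_grho_rpow hγ hz hx p).fderiv, grushinInner_add_left,
    grushinInner_smul_left, grushinInner_smul_left, grushinInner_smul_left,
    grushinInner_fderiv_grho_self hγ hz hx, grushinInner_fderiv_norm_fst_rpow_grho hγ hz hx,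
    Real.rpow_sub_one hz, Real.rpow_add hρ, Real.rpow_one]
  field_simp
  ring

end

end

theorem stmt4_general (γ : ℝ) (hγ : 0 < γ) (m k : ℕ)
    (z : GSp m k) (hz : grho γ z ≠ 0) (hx : z.1 ≠ 0) :
    (∑ i, fderiv ℝ (fun w : GSp m k => ‖w.1‖ ^ γ / grho γ w ^ γ) z
        (EuclideanSpace.single i (1:ℝ), 0) *
      fderiv ℝ (grho γ) z (EuclideanSpace.single i (1:ℝ), 0))
    + ‖z.1‖ ^ (2 * γ) * (∑ j, fderiv ℝ (fun w : GSp m k => ‖w.1‖ ^ γ / grho γ w ^ γ) z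
        (0, EuclideanSpace.single j (1:ℝ)) *
      fderiv ℝ (grho γ) z (0, EuclideanSpace.single j (1:ℝ))) = 0 :=
  grushinInner_fderiv_norm_fst_rpow_div_grho_rpow_eq_zero (by positivity) hz hx γ

/-- `∇_γ(|∇_γρ|) · ∇_γρ = 0`. -/
theorem stmt4 (γ : ℝ) (hγ : 0 < γ) (m k : ℕ) (hm : 1 ≤ m) (hk : 1 ≤ k)
    (z : GSp m k) (hz : grho γ z ≠ 0) (hx : z.1 ≠ 0) :
    (∑ i, fderiv ℝ (fun w : GSp m k => ‖w.1‖ ^ γ / grho γ w ^ γ) z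
        (EuclideanSpace.single i (1:ℝ), 0) *
      fderiv ℝ (grho γ) z (EuclideanSpace.single i (1:ℝ), 0))
    + ‖z.1‖ ^ (2 * γ) * (∑ j, fderiv ℝ (fun w : GSp m k => ‖w.1‖ ^ γ / grho γ w ^ γ) z
        (0, EuclideanSpace.single j (1:ℝ)) *
      fderiv ℝ (grho γ) z (0, EuclideanSpace.single j (1:ℝ))) = 0 :=
  stmt4_general γ hγ m k z hz hx
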